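/- arXiv:1310.6816 — 2 statements merged into one kernel-verified Lean document; each statement's English description precedes it below -/
import Mathlib

section
/- Let N ≥ 2, N/(2N−1) < α < 1 with 2α < N, and set 2* = 2N/(N−2α). Suppose C > 0 is a constant such that ‖v‖_{L^{2*}} ≤ C ‖D^α v‖_{L²} for all Schwartz v : ℝ^N → ℂ. Let δ₀ > 0 and let u be a Schwartz function satisfying ‖D^α u‖_{L²}² < C^{−N/α} and (1/2)‖D^α u‖_{L²}² − (1/2*)‖u‖_{L^{2*}}^{2*} ≤ (1 − δ₀)·(α/N)·C^{−N/α}. Then there exists δ̄ > 0, depending only on δ₀, N and α, such that ∫ |D^α u|² dx ≤ (1 − δ̄) C^{−N/α} and ∫ |D^α u|² dx − ∫ |u|^{2*} dx ≥ δ̄ ∫ |D^α u|² dx. -/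
open MeasureTheory Complex

/-- Fractional derivative `D^α f = 𝓕⁻¹(‖ξ‖^α 𝓕f)`. -/
noncomputable def fracD (N : ℕ) (α : ℝ) (f : EuclideanSpace ℝ (Fin N) → ℂ) :
    EuclideanSpace ℝ (Fin N) → ℂ :=
  VectorFourier.fourierIntegral Real.fourierChar volume (-innerₗ _) fun ξ => ((‖ξ‖ ^ α : ℝ) : ℂ) *
    VectorFourier.fourierIntegral Real.fourierChar volume (innerₗ _) f ξ

/-- **Variational (coercivity) estimates below the ground state.**
If `‖D^α u‖₂² < C^{−N/α}` (i.e. `‖D^α u‖₂ < ‖D^α W‖₂`) and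
`E₋(u) ≤ (1 − δ₀) (α/N) C^{−N/α}` (i.e. `E₋(u) ≤ (1 − δ₀) E₋(W)`), where `C` is a
Sobolev embedding constant, then `∫|D^α u|² ≤ (1 − δ̄) C^{−N/α}` and
`∫|D^α u|² − ∫|u|^{2*} ≥ δ̄ ∫|D^α u|²` for some `δ̄ > 0` depending only on `δ₀, N, α`. -/
theorem variational_estimates
    (N : ℕ) (hN : 2 ≤ N) (α : ℝ)
    (hα₁ : (N : ℝ) / (2 * N - 1) < α) (hα₂ : α < 1) (hαN : 2 * α < N)
    (C : ℝ) (hC : 0 < C)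
    (hSob : ∀ v : SchwartzMap (EuclideanSpace ℝ (Fin N)) ℂ,
        (∫ x, ‖v x‖ ^ (2 * N / (N - 2 * α))) ^ ((N - 2 * α) / (2 * N))
          ≤ C * (∫ x, ‖fracD N α (⇑v) x‖ ^ (2:ℝ)) ^ (1 / 2 : ℝ))
    (δ₀ : ℝ) (hδ₀ : 0 < δ₀) :
    ∃ δb > 0, ∀ u : SchwartzMap (EuclideanSpace ℝ (Fin N)) ℂ,
      (∫ x, ‖fracD N α (⇑u) x‖ ^ (2:ℝ)) < C ^ (-(N / α))
      → (1 / 2) * (∫ x, ‖fracD N α (⇑u) x‖ ^ (2:ℝ))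
          - ((N - 2 * α) / (2 * N)) * (∫ x, ‖u x‖ ^ (2 * N / (N - 2 * α)))
          ≤ (1 - δ₀) * (α / N) * C ^ (-(N / α))
      → (∫ x, ‖fracD N α (⇑u) x‖ ^ (2:ℝ)) ≤ (1 - δb) * C ^ (-(N / α))
        ∧ (∫ x, ‖fracD N α (⇑u) x‖ ^ (2:ℝ)) - (∫ x, ‖u x‖ ^ (2 * N / (N - 2 * α)))
            ≥ δb * (∫ x, ‖fracD N α (⇑u) x‖ ^ (2:ℝ)) := by
  have hNR : (2:ℝ) ≤ (N:ℝ) := by exact_mod_cast hN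
  have hN0 : (0:ℝ) < (N:ℝ) := by linarith
  have hα0 : 0 < α := lt_trans (div_pos hN0 (by linarith)) hα₁
  have hd : 0 < (N:ℝ) - 2 * α := by linarith
  have hd' : ((N:ℝ) - 2 * α) ≠ 0 := ne_of_gt hd
  set s : ℝ := (N:ℝ) / ((N:ℝ) - 2 * α) with hsdef
  have hs1 : 1 < s := (one_lt_div hd).2 (by linarith)
  set q : ℝ := 2 * (N:ℝ) / ((N:ℝ) - 2 * α) with hqdef
  have hq0 : 0 < q := by rw [hqdef]; positivity
  set e : ℝ := ((N:ℝ) - 2 * α) / (2 * (N:ℝ)) with hedef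
  have he0 : 0 < e := by rw [hedef]; positivity
  have heq : e * q = 1 := by rw [hedef, hqdef]; field_simp
  have he2 : α / (N:ℝ) = 1 / 2 - e := by rw [hedef]; field_simp; ring
  set M : ℝ := C ^ (-((N:ℝ) / α)) with hMdef
  have hM0 : 0 < M := Real.rpow_pos_of_pos hC _
  have key : C ^ q * M ^ (s - 1) = 1 := by
    rw [hMdef, ← Real.rpow_mul hC.le, ← Real.rpow_add hC]
    have hz : q + -((N:ℝ) / α) * (s - 1) = 0 := by
      rw [hqdef, hsdef]; field_simp; ring
    rw [hz, Real.rpow_zero]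
  set δ₁ : ℝ := min δ₀ (1/2) with hδ₁def
  have hδ₁0 : 0 < δ₁ := lt_min hδ₀ (by norm_num)
  have hδ₁half : δ₁ ≤ 1/2 := min_le_right _ _
  have hδ₁δ₀ : δ₁ ≤ δ₀ := min_le_left _ _
  have hpow1 : (1 - δ₁) ^ (s - 1) < 1 :=
    Real.rpow_lt_one (by linarith) (by linarith) (by linarith)
  set δb : ℝ := min δ₁ (1 - (1 - δ₁) ^ (s - 1)) with hδbdef
  have hδb0 : 0 < δb := lt_min hδ₁0 (by linarith)
  have hδbδ₁ : δb ≤ δ₁ := min_le_left _ _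
  have hδbpow : δb ≤ 1 - (1 - δ₁) ^ (s - 1) := min_le_right _ _
  refine ⟨δb, hδb0, fun u h1 h2 => ?_⟩
  set K : ℝ := ∫ x, ‖fracD N α (⇑u) x‖ ^ (2:ℝ) with hKdef
  set P : ℝ := ∫ x, ‖u x‖ ^ q with hPdef
  have hK0 : 0 ≤ K :=
    integral_nonneg fun x => Real.rpow_nonneg (norm_nonneg _) _
  have hP0 : 0 ≤ P :=
    integral_nonneg fun x => Real.rpow_nonneg (norm_nonneg _) _
  have hsob : P ^ e ≤ C * K ^ ((1:ℝ)/2) := hSob u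
  -- Sobolev inequality in power form : P ≤ C^q * K^s
  have hPK : P ≤ C ^ q * K ^ s := by
    have h := Real.rpow_le_rpow (Real.rpow_nonneg hP0 _) hsob hq0.le
    rw [← Real.rpow_mul hP0, heq, Real.rpow_one,
        Real.mul_rpow hC.le (Real.rpow_nonneg hK0 _),
        ← Real.rpow_mul hK0] at h
    have h12 : (1:ℝ)/2 * q = s := by rw [hqdef, hsdef]; ring
    rwa [h12] at h
  -- split K^s = K^(s-1) * K
  have hKsplit : K ^ s = K ^ (s - 1) * K := by
    have h' : K ^ (s - 1 + 1) = K ^ (s - 1) * K ^ (1:ℝ) :=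
      Real.rpow_add' hK0 (by linarith)
    rw [Real.rpow_one] at h'
    rw [show s - 1 + 1 = s by ring] at h'
    exact h'
  -- C^q K^s ≤ K since K ≤ M
  have hCqK : C ^ q * K ^ s ≤ K := by
    have hKs1 : K ^ (s - 1) ≤ M ^ (s - 1) :=
      Real.rpow_le_rpow hK0 h1.le (by linarith)
    have h5 : K ^ s ≤ M ^ (s - 1) * K := by
      rw [hKsplit]; exact mul_le_mul_of_nonneg_right hKs1 hK0
    calc C ^ q * K ^ s ≤ C ^ q * (M ^ (s - 1) * K) :=
          mul_le_mul_of_nonneg_left h5 (Real.rpow_nonneg hC.le _)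
      _ = (C ^ q * M ^ (s - 1)) * K := by ring
      _ = K := by rw [key, one_mul]
  have ha : 0 < α / (N:ℝ) := by positivity
  -- energy trapping : K ≤ (1-δ₁) M
  have hEl : α / (N:ℝ) * K ≤ α / (N:ℝ) * ((1 - δ₁) * M) := by
    have h3 : e * (C ^ q * K ^ s) ≤ e * K :=
      mul_le_mul_of_nonneg_left hCqK he0.le
    have h4 : e * P ≤ e * (C ^ q * K ^ s) :=
      mul_le_mul_of_nonneg_left hPK he0.le
    have hδle : (1 - δ₀) * (α / (N:ℝ)) * M ≤ α / (N:ℝ) * ((1 - δ₁) * M) := by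
      have haM : 0 ≤ α / (N:ℝ) * M := le_of_lt (by positivity)
      nlinarith
    have hstep : α / (N:ℝ) * K = 1/2 * K - e * K := by rw [he2]; ring
    rw [hstep]
    linarith
  have hK1 : K ≤ (1 - δ₁) * M := le_of_mul_le_mul_left hEl ha
  -- P ≤ (1-δ₁)^(s-1) * K
  have hPle : P ≤ (1 - δ₁) ^ (s - 1) * K := by
    have hKs1 : K ^ (s - 1) ≤ (1 - δ₁) ^ (s - 1) * M ^ (s - 1) := by
      rw [← Real.mul_rpow (by linarith) hM0.le]
      exact Real.rpow_le_rpow hK0 hK1 (by linarith)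
    calc P ≤ C ^ q * K ^ s := hPK
      _ = C ^ q * (K ^ (s - 1) * K) := by rw [hKsplit]
      _ ≤ C ^ q * ((1 - δ₁) ^ (s - 1) * M ^ (s - 1) * K) :=
          mul_le_mul_of_nonneg_left
            (mul_le_mul_of_nonneg_right hKs1 hK0) (Real.rpow_nonneg hC.le _)
      _ = (C ^ q * M ^ (s - 1)) * ((1 - δ₁) ^ (s - 1) * K) := by ring
      _ = (1 - δ₁) ^ (s - 1) * K := by rw [key, one_mul]
  constructor
  · exact hK1.trans (mul_le_mul_of_nonneg_right (by linarith) hM0.le)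
  · have hfin : δb * K ≤ (1 - (1 - δ₁) ^ (s - 1)) * K :=
      mul_le_mul_of_nonneg_right hδbpow hK0
    have hexp : (1 - (1 - δ₁) ^ (s - 1)) * K = K - (1 - δ₁) ^ (s - 1) * K := by ring
    rw [hexp] at hfin
    linarith
end

section
/- Let N ≥ 1 and p > 0. For every Schwartz function u : ℝ^N → ℂ and every smooth compactly supported real-valued φ : ℝ^N → ℝ, one has Re ∫_{ℝ^N} |u(x)|^p u(x) (x φ(x)) · ∇ū(x) dx = − (1/(p+2)) ∫_{ℝ^N} |u(x)|^{p+2} ( N φ(x) + x · ∇φ(x) ) dx. -/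
open MeasureTheory Complex

/-- **Nonlinear term computation in the localized virial identity:**
`Re ∫ |u|^p u (xφ)·∇ū dx = −(1/(p+2)) ∫ |u|^{p+2} (Nφ + x·∇φ) dx`. -/
theorem localized_virial_nonlinear_term
    (N : ℕ) (hN : 1 ≤ N) (p : ℝ) (hp : 0 < p)
    (u : SchwartzMap (EuclideanSpace ℝ (Fin N)) ℂ)
    (φ : EuclideanSpace ℝ (Fin N) → ℝ)
    (hφ_smooth : ContDiff ℝ (⊤ : ℕ∞) φ) (hφ_supp : HasCompactSupport φ) :
    (∫ x : EuclideanSpace ℝ (Fin N),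
        ((‖u x‖ ^ p : ℝ) : ℂ) * u x * (φ x : ℂ) *
          ∑ j, ((x j : ℝ) : ℂ) *
            (starRingEnd ℂ) (fderiv ℝ (⇑u) x (EuclideanSpace.single j 1))).re
      = -(1 / (p + 2)) * ∫ x : EuclideanSpace ℝ (Fin N),
          ‖u x‖ ^ (p + 2) *
            ((N : ℝ) * φ x + ∑ j, x j * fderiv ℝ φ x (EuclideanSpace.single j 1)) := by
  classical
  have hp2 : p + 2 ≠ 0 := by linarith
  have hud : Differentiable ℝ (⇑u) := (u.smooth 1).differentiable (by simp)
  have hufc : Continuous (fderiv ℝ (⇑u)) := (u.smooth 1).continuous_fderiv (by simp)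
  have hφd : Differentiable ℝ φ := hφ_smooth.differentiable (by simp)
  have hφfc : Continuous (fderiv ℝ φ) := hφ_smooth.continuous_fderiv (by simp)
  set α : ℝ := (p + 2) / 2 with hα
  have hα1 : (1 : ℝ) ≤ α := by rw [hα]; linarith
  set e : Fin N → EuclideanSpace ℝ (Fin N) := fun j => EuclideanSpace.single j 1 with he
  set f : EuclideanSpace ℝ (Fin N) → ℝ := fun y => (‖u y‖ ^ 2 : ℝ) ^ α with hfdef
  -- rpow facts
  have hpow : ∀ (r β : ℝ), 0 ≤ r → ((r ^ 2 : ℝ)) ^ β = r ^ (2 * β) := by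
    intro r β hr
    rw [← Real.rpow_natCast r 2, ← Real.rpow_mul hr]
    norm_num
  have hqp : ∀ x : EuclideanSpace ℝ (Fin N), ((‖u x‖ ^ 2 : ℝ)) ^ (α - 1) = ‖u x‖ ^ p := by
    intro x
    rw [hpow _ _ (norm_nonneg _), show 2 * (α - 1) = p by rw [hα]; ring]
  have hfval : ∀ x, f x = ‖u x‖ ^ (p + 2) := by
    intro x
    simp only [hfdef]
    rw [hpow _ _ (norm_nonneg _), show 2 * α = p + 2 by rw [hα]; ring]
  -- derivatives
  have hq : ∀ x, HasFDerivAt (fun y => ‖u y‖ ^ 2)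
      ((2 : ℕ) • (innerSL ℝ (u x)).comp (fderiv ℝ (⇑u) x)) x := fun x =>
    ((hud x).hasFDerivAt).norm_sq
  have hfd : ∀ x, HasFDerivAt f
      ((α * (‖u x‖ ^ 2 : ℝ) ^ (α - 1)) • ((2 : ℕ) • (innerSL ℝ (u x)).comp (fderiv ℝ (⇑u) x))) x :=
    fun x => (hq x).rpow_const (Or.inr hα1)
  have hfdiff : Differentiable ℝ f := fun x => (hfd x).differentiableAt
  have hf' : ∀ (x v : EuclideanSpace ℝ (Fin N)),
      fderiv ℝ f x v
        = (p + 2) * (‖u x‖ ^ p * (u x * (starRingEnd ℂ) (fderiv ℝ (⇑u) x v)).re) := by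
    intro x v
    rw [(hfd x).fderiv]
    simp only [ContinuousLinearMap.smul_apply, ContinuousLinearMap.coe_smul',
      ContinuousLinearMap.comp_apply, innerSL_apply_apply, Pi.smul_apply, smul_eq_mul,
      nsmul_eq_mul, Nat.cast_ofNat]
    rw [Complex.inner]
    have h1 : (fderiv ℝ (⇑u) x v * (starRingEnd ℂ) (u x)).re
        = (u x * (starRingEnd ℂ) (fderiv ℝ (⇑u) x v)).re := by
      simp [Complex.mul_re, mul_comm]
    rw [h1, hqp x, hα]; ring
  -- derivative of g j = x j * φ x
  have hgd : ∀ (j : Fin N) (x : EuclideanSpace ℝ (Fin N)),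
      HasFDerivAt (fun y : EuclideanSpace ℝ (Fin N) => y j * φ y)
        ((x j) • fderiv ℝ φ x + (φ x) • (EuclideanSpace.proj j
          : EuclideanSpace ℝ (Fin N) →L[ℝ] ℝ)) x := by
    intro j x
    have h1 : HasFDerivAt (fun y : EuclideanSpace ℝ (Fin N) => y j)
        (EuclideanSpace.proj j : EuclideanSpace ℝ (Fin N) →L[ℝ] ℝ) x :=
      (EuclideanSpace.proj (𝕜 := ℝ) j).hasFDerivAt
    exact h1.mul (hφd x).hasFDerivAt
  have hgdiff : ∀ j : Fin N, Differentiable ℝ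
      (fun y : EuclideanSpace ℝ (Fin N) => y j * φ y) :=
    fun j x => (hgd j x).differentiableAt
  have hej : ∀ j : Fin N, (e j) j = 1 := by
    intro j; simp [he, EuclideanSpace.single_apply]
  have hg' : ∀ (j : Fin N) (x : EuclideanSpace ℝ (Fin N)),
      fderiv ℝ (fun y : EuclideanSpace ℝ (Fin N) => y j * φ y) x (e j)
        = φ x + x j * fderiv ℝ φ x (e j) := by
    intro j x
    rw [(hgd j x).fderiv]
    simp only [ContinuousLinearMap.add_apply, ContinuousLinearMap.coe_smul',
      Pi.smul_apply, smul_eq_mul, PiLp.proj_apply, hej j]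
    ring
  -- vanishing outside tsupport φ
  have hφ0 : ∀ x, x ∉ tsupport φ → φ x = 0 := fun x hx => image_eq_zero_of_notMem_tsupport hx
  have hφ'0 : ∀ x, x ∉ tsupport φ → fderiv ℝ φ x = 0 := by
    intro x hx
    by_contra h
    exact hx (support_fderiv_subset ℝ (by simpa [Function.support] using h))
  -- integrability helper
  have hint : ∀ (h : EuclideanSpace ℝ (Fin N) → ℝ), Continuous h →
      (∀ x, x ∉ tsupport φ → h x = 0) → Integrable h (volume) := fun h hc h0 =>
    hc.integrable_of_hasCompactSupport (HasCompactSupport.intro hφ_supp h0)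
  -- continuity pieces
  have hcnp : Continuous fun x => ‖u x‖ ^ p :=
    (u.continuous.norm).rpow_const fun x => Or.inr hp.le
  have hcd : ∀ j : Fin N, Continuous fun x => fderiv ℝ (⇑u) x (e j) :=
    fun j => hufc.clm_apply continuous_const
  have hcφd : ∀ j : Fin N, Continuous fun x => fderiv ℝ φ x (e j) :=
    fun j => hφfc.clm_apply continuous_const
  have hcf : Continuous f :=
    ((u.continuous.norm.pow 2)).rpow_const fun x => Or.inr (by rw [hα]; linarith)
  have hcf' : ∀ j : Fin N, Continuous fun x => fderiv ℝ f x (e j) := by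
    intro j
    have : (fun x => fderiv ℝ f x (e j))
        = fun x => (p + 2) * (‖u x‖ ^ p * (u x * (starRingEnd ℂ) (fderiv ℝ (⇑u) x (e j))).re) :=
      funext fun x => hf' x (e j)
    rw [this]
    exact continuous_const.mul (hcnp.mul
      ((Complex.continuous_re.comp (u.continuous.mul
        ((Complex.continuous_conj).comp (hcd j))))))
  have hcproj : ∀ j : Fin N, Continuous fun x : EuclideanSpace ℝ (Fin N) => x j :=
    fun j => (EuclideanSpace.proj j).continuous
  -- integrabilities for IBP
  have hint1 : ∀ j : Fin N, Integrable (fun x => (x j * φ x) * fderiv ℝ f x (e j)) volume := by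
    intro j
    refine hint _ (((hcproj j).mul hφ_smooth.continuous).mul (hcf' j)) fun x hx => by
      simp [hφ0 x hx]
  have hint2 : ∀ j : Fin N, Integrable
      (fun x => fderiv ℝ (fun y : EuclideanSpace ℝ (Fin N) => y j * φ y) x (e j) * f x) volume := by
    intro j
    have hcg' : Continuous fun x => fderiv ℝ (fun y : EuclideanSpace ℝ (Fin N) => y j * φ y) x (e j) := by
      have : (fun x => fderiv ℝ (fun y : EuclideanSpace ℝ (Fin N) => y j * φ y) x (e j))
          = fun x => φ x + x j * fderiv ℝ φ x (e j) := funext fun x => hg' j x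
      rw [this]
      exact hφ_smooth.continuous.add ((hcproj j).mul (hcφd j))
    refine hint _ (hcg'.mul hcf) fun x hx => ?_
    rw [hg' j x, hφ0 x hx, hφ'0 x hx]
    simp
  have hint3 : ∀ j : Fin N, Integrable (fun x => (x j * φ x) * f x) volume := by
    intro j
    refine hint _ (((hcproj j).mul hφ_smooth.continuous).mul hcf) fun x hx => by
      simp [hφ0 x hx]
  have hint4 : ∀ j : Fin N, Integrable (fun x => f x * (φ x + x j * fderiv ℝ φ x (e j))) volume := by
    intro j
    refine hint _ (hcf.mul (hφ_smooth.continuous.add ((hcproj j).mul (hcφd j)))) fun x hx => by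
      simp [hφ0 x hx, hφ'0 x hx]
  -- the complex integrand and its integrability
  set I : EuclideanSpace ℝ (Fin N) → ℂ := fun x =>
    ((‖u x‖ ^ p : ℝ) : ℂ) * u x * (φ x : ℂ) *
      ∑ j, ((x j : ℝ) : ℂ) * (starRingEnd ℂ) (fderiv ℝ (⇑u) x (e j)) with hIdef
  have hIcont : Continuous I := by
    apply Continuous.mul
    · exact ((Complex.continuous_ofReal.comp hcnp).mul u.continuous).mul
        (Complex.continuous_ofReal.comp hφ_smooth.continuous)
    · exact continuous_finset_sum _ fun j _ =>
        (Complex.continuous_ofReal.comp (hcproj j)).mul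
          ((Complex.continuous_conj).comp (hcd j))
  have hIint : Integrable I volume := by
    refine hIcont.integrable_of_hasCompactSupport (HasCompactSupport.intro hφ_supp ?_)
    intro x hx
    simp [hIdef, hφ0 x hx]
  -- pointwise real-part identity
  have hrepoint : ∀ x, (I x).re
      = (1 / (p + 2)) * ∑ j, (x j * φ x) * fderiv ℝ f x (e j) := by
    intro x
    rw [hIdef]
    simp only []
    rw [Finset.mul_sum, Complex.re_sum, Finset.mul_sum]
    refine Finset.sum_congr rfl fun j _ => ?_
    rw [hf' x (e j)]
    rw [show ((‖u x‖ ^ p : ℝ) : ℂ) * u x * ((φ x : ℝ) : ℂ) *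
        (((x j : ℝ) : ℂ) * (starRingEnd ℂ) (fderiv ℝ (⇑u) x (e j)))
        = (((‖u x‖ ^ p * φ x * x j : ℝ)) : ℂ) *
          (u x * (starRingEnd ℂ) (fderiv ℝ (⇑u) x (e j))) by push_cast; ring]
    rw [Complex.re_ofReal_mul]
    field_simp
  -- main computation
  have hre : (∫ x, I x).re = ∫ x, (I x).re :=
    (ContinuousLinearMap.integral_comp_comm Complex.reCLM hIint).symm
  rw [show (∫ x : EuclideanSpace ℝ (Fin N),
        ((‖u x‖ ^ p : ℝ) : ℂ) * u x * (φ x : ℂ) *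
          ∑ j, ((x j : ℝ) : ℂ) *
            (starRingEnd ℂ) (fderiv ℝ (⇑u) x (EuclideanSpace.single j 1)))
      = ∫ x, I x from rfl]
  rw [hre]
  calc ∫ x, (I x).re
      = ∫ x, (1 / (p + 2)) * ∑ j, (x j * φ x) * fderiv ℝ f x (e j) := by
        simp only [hrepoint]
    _ = (1 / (p + 2)) * ∫ x, ∑ j, (x j * φ x) * fderiv ℝ f x (e j) :=
        integral_const_mul _ _
    _ = (1 / (p + 2)) * ∑ j, ∫ x, (x j * φ x) * fderiv ℝ f x (e j) := by
        rw [integral_finset_sum _ fun j _ => hint1 j]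
    _ = (1 / (p + 2)) * ∑ j, -∫ x, f x * (φ x + x j * fderiv ℝ φ x (e j)) := by
        congr 1
        refine Finset.sum_congr rfl fun j _ => ?_
        have := integral_mul_fderiv_eq_neg_fderiv_mul_of_integrable
          (μ := (volume : Measure (EuclideanSpace ℝ (Fin N))))
          (f := fun y : EuclideanSpace ℝ (Fin N) => y j * φ y) (g := f) (v := e j)
          (hint2 j) (hint1 j) (hint3 j) (fun x _ => hgdiff j x) (fun x _ => hfdiff x)
        rw [this]
        congr 1
        refine integral_congr_ae (Filter.Eventually.of_forall fun x => ?_)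
        simp only [hg']
        ring
    _ = -(1 / (p + 2)) * ∫ x, ∑ j, f x * (φ x + x j * fderiv ℝ φ x (e j)) := by
        rw [integral_finset_sum _ fun j _ => hint4 j]
        simp only [Finset.sum_neg_distrib]
        ring
    _ = -(1 / (p + 2)) * ∫ x : EuclideanSpace ℝ (Fin N),
          ‖u x‖ ^ (p + 2) *
            ((N : ℝ) * φ x + ∑ j, x j * fderiv ℝ φ x (EuclideanSpace.single j 1)) := by
        congr 1
        refine integral_congr_ae (Filter.Eventually.of_forall fun x => ?_)
        simp only [← Finset.mul_sum, he]
        rw [hfval x]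
        congr 1
        rw [Finset.sum_add_distrib, Finset.sum_const, Finset.card_univ, Fintype.card_fin,
          nsmul_eq_mul]
end
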